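/- arXiv:1712.00942 — 2 statements merged into one kernel-verified Lean document; each statement's English description precedes it below -/
import Mathlib

section
/- For any 1 ≤ p < ∞, τ > 0, and t ∈ ℝ, the function τ ↦ log Θ_p(τ; t) is twice differentiable with second derivative ∂²/∂τ² log Θ_p(τ; t) = E_{X∼D_p(τ;t)}[|X|^{2p}] − μ_p(τ; t)², and this second derivative is strictly positive. -/
/-!
With `a z = |z - t|^p`, `Θ_p(τ; t) = ∑ exp(-τ a z)` is the partition function of a Gibbs family
on `ℤ`, and `μ_p`, `E|X|^{2p}` are its first two normalized moments `M₁/M₀`, `M₂/M₀`, where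
`Mₖ(τ) = ∑ a^k exp(-τ a)`. Since `a ≥ 0` and `exp(-c a)` is summable for every `c > 0`
(`|x|^p ≥ |x| - 1` for `p ≥ 1`), each `Mₖ` may be differentiated termwise on `τ > 0`, giving
`Mₖ' = -Mₖ₊₁`. Hence `(log M₀)' = -M₁/M₀` and `(log M₀)'' = M₂/M₀ - (M₁/M₀)²`, the variance
of `a(X)`; it is positive because `a` is not constant on `ℤ`.
-/

open Real BigOperators

/-- `Θ_p(τ; s) = ∑_{z ∈ ℤ} exp(-τ |z - s|^p)`. -/
noncomputable def Theta1 (p τ s : ℝ) : ℝ :=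
  ∑' z : ℤ, Real.exp (-τ * |(z : ℝ) - s| ^ p)

/-- `μ_p(τ; s) = E_{X ∼ D_p(τ;s)}[|X|^p]`, where `D_p(τ; s)` assigns to each
`x ∈ ℤ - s` probability `exp(-τ|x|^p)/Θ_p(τ; s)`. -/
noncomputable def mu1 (p τ s : ℝ) : ℝ :=
  (∑' z : ℤ, |(z : ℝ) - s| ^ p * Real.exp (-τ * |(z : ℝ) - s| ^ p)) / Theta1 p τ s

/-- `E_{X ∼ D_p(τ;s)}[|X|^{2p}]`, the second-moment analogue of `μ_p`. -/
noncomputable def secondMoment (p τ s : ℝ) : ℝ :=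
  (∑' z : ℤ, |(z : ℝ) - s| ^ (2 * p) * Real.exp (-τ * |(z : ℝ) - s| ^ p)) / Theta1 p τ s

theorem sub_one_le_rpow_of_one_le {x p : ℝ} (hx : 0 ≤ x) (hp : 1 ≤ p) : x - 1 ≤ x ^ p := by
  rcases le_or_gt 1 x with h | h
  · calc x - 1 ≤ x ^ (1 : ℝ) := by rw [rpow_one]; linarith
      _ ≤ x ^ p := rpow_le_rpow_of_exponent_le h hp
  · linarith [rpow_nonneg hx p]

theorem summable_exp_neg_mul_abs_int {c : ℝ} (hc : 0 < c) :
    Summable fun z : ℤ => exp (-c * |(z : ℝ)|) := by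
  have geom : Summable fun n : ℕ => exp (n * -c) := summable_exp_nat_mul_iff.mpr (by linarith)
  apply Summable.of_nat_of_neg <;> refine geom.congr fun n => ?_ <;> simp [mul_comm]

theorem summable_exp_neg_mul_abs_int_sub_rpow (t : ℝ) {p c : ℝ} (hp : 1 ≤ p) (hc : 0 < c) :
    Summable fun z : ℤ => exp (-c * |(z : ℝ) - t| ^ p) := by
  refine ((summable_exp_neg_mul_abs_int hc).mul_left (exp (c * (1 + |t|)))).of_nonneg_of_le
    (fun z => (exp_pos _).le) fun z => ?_
  have hz : |(z : ℝ)| - |t| - 1 ≤ |(z : ℝ) - t| ^ p := by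
    linarith [abs_sub_abs_le_abs_sub (z : ℝ) t,
      sub_one_le_rpow_of_one_le (abs_nonneg ((z : ℝ) - t)) hp]
  rw [← exp_add, exp_le_exp]
  nlinarith

theorem pow_mul_exp_neg_mul_le {a c : ℝ} (ha : 0 ≤ a) (hc : 0 < c) (k : ℕ) :
    a ^ k * exp (-c * a) ≤ k.factorial * (2 / c) ^ k * exp (-(c / 2) * a) := by
  have hexp : (c / 2 * a) ^ k ≤ k.factorial * exp (c / 2 * a) := by
    have h := pow_div_factorial_le_exp (x := c / 2 * a) (by positivity) k
    rw [div_le_iff₀ (by positivity)] at h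
    linarith
  calc a ^ k * exp (-c * a) = (2 / c) ^ k * (c / 2 * a) ^ k * exp (-c * a) := by
        rw [← mul_pow]; field_simp
    _ ≤ (2 / c) ^ k * (k.factorial * exp (c / 2 * a)) * exp (-c * a) := by gcongr
    _ = k.factorial * (2 / c) ^ k * exp (-(c / 2) * a) := by
        rw [mul_assoc, mul_assoc, ← exp_add]; ring_nf

theorem hasDerivAt_pow_mul_exp_neg_mul (a : ℝ) (k : ℕ) (y : ℝ) :
    HasDerivAt (fun y => a ^ k * exp (-y * a)) (-(a ^ (k + 1) * exp (-y * a))) y := by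
  have hlin : HasDerivAt (fun y => -y * a) (-a) y := by
    simpa using (hasDerivAt_neg y).mul_const a
  exact (hlin.exp.const_mul (a ^ k)).congr_deriv (by ring)

section GibbsMoment

variable {ι : Type*} {a : ι → ℝ} {τ : ℝ}

noncomputable def gibbsMoment (a : ι → ℝ) (k : ℕ) (τ : ℝ) : ℝ :=
  ∑' i, a i ^ k * exp (-τ * a i)

theorem summable_pow_mul_exp_neg_mul (ha : ∀ i, 0 ≤ a i)
    (hs : ∀ c, 0 < c → Summable fun i => exp (-c * a i)) (k : ℕ) {c : ℝ} (hc : 0 < c) :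
    Summable fun i => a i ^ k * exp (-c * a i) :=
  ((hs (c / 2) (by positivity)).mul_left _).of_nonneg_of_le
    (fun i => mul_nonneg (pow_nonneg (ha i) k) (exp_pos _).le)
    fun i => pow_mul_exp_neg_mul_le (ha i) hc k

theorem hasDerivAt_gibbsMoment (ha : ∀ i, 0 ≤ a i)
    (hs : ∀ c, 0 < c → Summable fun i => exp (-c * a i)) (k : ℕ) (hτ : 0 < τ) :
    HasDerivAt (gibbsMoment a k) (-gibbsMoment a (k + 1) τ) τ := by
  have hτ' : τ ∈ Set.Ioi (τ / 2) := half_lt_self hτ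
  have hsum := hasDerivAt_tsum_of_isPreconnected
    (g := fun i y => a i ^ k * exp (-y * a i))
    (g' := fun i y => -(a i ^ (k + 1) * exp (-y * a i)))
    (summable_pow_mul_exp_neg_mul ha hs (k + 1) (half_pos hτ)) isOpen_Ioi isPreconnected_Ioi
    (fun i y _ => ?_) (fun i y hy => ?_) hτ' (summable_pow_mul_exp_neg_mul ha hs k hτ) hτ'
  · rw [tsum_neg] at hsum
    exact hsum
  · exact hasDerivAt_pow_mul_exp_neg_mul (a i) k y
  · rw [norm_neg, norm_of_nonneg (mul_nonneg (pow_nonneg (ha i) _) (exp_pos _).le)]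
    have := ha i
    gcongr
    exact le_of_lt hy

theorem gibbsMoment_zero_pos (hs : Summable fun i => exp (-τ * a i)) (i : ι) :
    0 < gibbsMoment a 0 τ := by
  simp only [gibbsMoment, pow_zero, one_mul]
  exact hs.tsum_pos (fun _ => (exp_pos _).le) i (exp_pos _)

theorem hasDerivAt_log_gibbsMoment_zero (ha : ∀ i, 0 ≤ a i)
    (hs : ∀ c, 0 < c → Summable fun i => exp (-c * a i)) (i : ι) (hτ : 0 < τ) :
    HasDerivAt (fun τ => log (gibbsMoment a 0 τ))
      (-(gibbsMoment a 1 τ / gibbsMoment a 0 τ)) τ := by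
  rw [← neg_div]
  exact (hasDerivAt_gibbsMoment ha hs 0 hτ).log (gibbsMoment_zero_pos (hs τ hτ) i).ne'

theorem hasDerivAt_deriv_log_gibbsMoment_zero (ha : ∀ i, 0 ≤ a i)
    (hs : ∀ c, 0 < c → Summable fun i => exp (-c * a i)) (i : ι) (hτ : 0 < τ) :
    HasDerivAt (deriv fun τ => log (gibbsMoment a 0 τ))
      (gibbsMoment a 2 τ / gibbsMoment a 0 τ - (gibbsMoment a 1 τ / gibbsMoment a 0 τ) ^ 2) τ := by
  have hderiv : deriv (fun τ => log (gibbsMoment a 0 τ)) =ᶠ[nhds τ]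
      fun τ => -(gibbsMoment a 1 τ / gibbsMoment a 0 τ) :=
    Filter.eventually_of_mem (isOpen_Ioi.mem_nhds hτ) fun _ hσ =>
      (hasDerivAt_log_gibbsMoment_zero ha hs i hσ).deriv
  have hquot := ((hasDerivAt_gibbsMoment ha hs 1 hτ).div (hasDerivAt_gibbsMoment ha hs 0 hτ)
    (gibbsMoment_zero_pos (hs τ hτ) i).ne').neg
  refine (hquot.congr_deriv ?_).congr_of_eventuallyEq hderiv
  norm_num only
  field_simp
  ring

theorem gibbsMoment_variance_eq (hs : ∀ k, Summable fun i => a i ^ k * exp (-τ * a i))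
    (h0 : gibbsMoment a 0 τ ≠ 0) :
    gibbsMoment a 2 τ / gibbsMoment a 0 τ - (gibbsMoment a 1 τ / gibbsMoment a 0 τ) ^ 2 =
      (∑' i, (a i - gibbsMoment a 1 τ / gibbsMoment a 0 τ) ^ 2 * exp (-τ * a i)) /
        gibbsMoment a 0 τ := by
  set m := gibbsMoment a 1 τ / gibbsMoment a 0 τ
  have hexpand : (∑' i, (a i - m) ^ 2 * exp (-τ * a i)) =
      gibbsMoment a 2 τ - 2 * m * gibbsMoment a 1 τ + m ^ 2 * gibbsMoment a 0 τ := by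
    rw [gibbsMoment, gibbsMoment, gibbsMoment, ← tsum_mul_left, ← tsum_mul_left,
      ← (hs 2).tsum_sub ((hs 1).mul_left _),
      ← ((hs 2).sub ((hs 1).mul_left _)).tsum_add ((hs 0).mul_left _)]
    exact tsum_congr fun i => by ring
  have hm : m * gibbsMoment a 0 τ = gibbsMoment a 1 τ := div_mul_cancel₀ _ h0
  rw [hexpand]
  field_simp
  linear_combination (-2 * m) * hm

theorem gibbsMoment_variance_pos (hs : ∀ k, Summable fun i => a i ^ k * exp (-τ * a i))
    {i j : ι} (hij : a i ≠ a j) :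
    0 < gibbsMoment a 2 τ / gibbsMoment a 0 τ - (gibbsMoment a 1 τ / gibbsMoment a 0 τ) ^ 2 := by
  have h0 : 0 < gibbsMoment a 0 τ :=
    gibbsMoment_zero_pos ((hs 0).congr fun _ => by rw [pow_zero, one_mul]) i
  rw [gibbsMoment_variance_eq hs h0.ne']
  set m := gibbsMoment a 1 τ / gibbsMoment a 0 τ
  have hsum : Summable fun i => (a i - m) ^ 2 * exp (-τ * a i) :=
    (((hs 2).sub ((hs 1).mul_left (2 * m))).add ((hs 0).mul_left (m ^ 2))).congr fun i => by ring
  have hterm : ∀ l, a l ≠ m → 0 < (a l - m) ^ 2 * exp (-τ * a l) := fun l hl =>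
    mul_pos (sq_pos_iff.mpr (sub_ne_zero.mpr hl)) (exp_pos _)
  refine div_pos ?_ h0
  obtain ⟨l, hl⟩ : ∃ l, a l ≠ m := by
    by_contra! h
    exact hij ((h i).trans (h j).symm)
  exact hsum.tsum_pos (fun _ => by positivity) l (hterm l hl)

end GibbsMoment

theorem theta1_eq_gibbsMoment (p τ t : ℝ) :
    Theta1 p τ t = gibbsMoment (fun z : ℤ => |(z : ℝ) - t| ^ p) 0 τ := by
  simp only [Theta1, gibbsMoment, pow_zero, one_mul]

theorem mu1_eq_gibbsMoment (p τ t : ℝ) :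
    mu1 p τ t = gibbsMoment (fun z : ℤ => |(z : ℝ) - t| ^ p) 1 τ /
      gibbsMoment (fun z : ℤ => |(z : ℝ) - t| ^ p) 0 τ := by
  simp only [mu1, theta1_eq_gibbsMoment, gibbsMoment, pow_one]

theorem secondMoment_eq_gibbsMoment (p τ t : ℝ) :
    secondMoment p τ t = gibbsMoment (fun z : ℤ => |(z : ℝ) - t| ^ p) 2 τ /
      gibbsMoment (fun z : ℤ => |(z : ℝ) - t| ^ p) 0 τ := by
  simp only [secondMoment, theta1_eq_gibbsMoment, gibbsMoment, mul_comm (2 : ℝ) p,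
    rpow_mul (abs_nonneg _), rpow_two]

theorem abs_ceil_sub_rpow_lt (t : ℝ) {p : ℝ} (hp : 0 < p) :
    |((⌈t⌉ : ℤ) : ℝ) - t| ^ p < |((⌈t⌉ + 1 : ℤ) : ℝ) - t| ^ p := by
  have h0 : 0 ≤ (⌈t⌉ : ℝ) - t := sub_nonneg.mpr (Int.le_ceil t)
  push_cast
  rw [abs_of_nonneg h0, abs_of_nonneg (by linarith)]
  exact rpow_lt_rpow h0 (by linarith) hp

/-- For any `1 ≤ p < ∞`, `τ > 0` and `t ∈ ℝ`, the function `τ ↦ log Θ_p(τ; t)` is twice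
differentiable at `τ`: its derivative function has derivative
`E_{X∼D_p(τ;t)}[|X|^{2p}] − μ_p(τ; t)²` at `τ`, and this quantity is strictly positive. -/
theorem hasDerivAt_deriv_log_theta (p τ t : ℝ) (hp : 1 ≤ p) (hτ : 0 < τ) :
    HasDerivAt (deriv (fun τ' => Real.log (Theta1 p τ' t)))
      (secondMoment p τ t - (mu1 p τ t) ^ 2) τ ∧
      0 < secondMoment p τ t - (mu1 p τ t) ^ 2 := by
  have ha : ∀ z : ℤ, 0 ≤ |(z : ℝ) - t| ^ p := fun z => rpow_nonneg (abs_nonneg _) p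
  have hs : ∀ c, 0 < c → Summable fun z : ℤ => exp (-c * |(z : ℝ) - t| ^ p) :=
    fun c hc => summable_exp_neg_mul_abs_int_sub_rpow t hp hc
  simp only [theta1_eq_gibbsMoment, secondMoment_eq_gibbsMoment, mu1_eq_gibbsMoment]
  exact ⟨hasDerivAt_deriv_log_gibbsMoment_zero ha hs 0 hτ,
    gibbsMoment_variance_pos (fun k => summable_pow_mul_exp_neg_mul ha hs k hτ)
      (abs_ceil_sub_rpow_lt t (by linarith)).ne⟩
end

section
/- For every p ≥ 3, inf_{τ > 0} exp(τ/2^p)·Θ_p(τ) < 2. -/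
open Real BigOperators

/-!
Take `τ = 3`. On integers `|z| ≤ |z|^p`, so `Θ_p(3)` is dominated by the two-sided geometric
series `∑ e^{-3|z|} = (1 + e^{-3}) / (1 - e^{-3}) ≤ 7/6`, while `e^{3/2^p} ≤ e^{3/8} ≤ 8/5`;
and `8/5 · 7/6 < 2`.
-/

/-- `Θ_p(τ) = ∑_{z ∈ ℤ} exp(-τ |z|^p)`. -/
noncomputable def Theta (p τ : ℝ) : ℝ :=
  ∑' z : ℤ, Real.exp (-τ * |(z : ℝ)| ^ p)

theorem hasSum_pow_natAbs {K : Type*} [NormedField K] {r : K} (hr : ‖r‖ < 1) :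
    HasSum (fun z : ℤ ↦ r ^ z.natAbs) ((1 + r) / (1 - r)) := by
  have hpos := hasSum_geometric_of_norm_lt_one hr
  have hneg : HasSum (fun n : ℕ ↦ r ^ (-((n : ℤ) + 1)).natAbs) (r * (1 - r)⁻¹) := by
    have h : (fun n : ℕ ↦ r ^ (-((n : ℤ) + 1)).natAbs) = fun n ↦ r * r ^ n := by
      funext n
      rw [show (-((n : ℤ) + 1)).natAbs = n + 1 by omega, pow_succ']
    exact h ▸ hpos.mul_left r
  rw [div_eq_mul_inv, add_mul, one_mul]
  exact hpos.of_nat_of_neg_add_one hneg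

theorem exp_neg_mul_rpow_abs_le {p τ : ℝ} (hp : 1 ≤ p) (hτ : 0 ≤ τ) (z : ℤ) :
    exp (-τ * |(z : ℝ)| ^ p) ≤ exp (-τ) ^ z.natAbs := by
  rw [← exp_nat_mul, exp_le_exp, Nat.cast_natAbs, Int.cast_abs]
  have h : |(z : ℝ)| ≤ |(z : ℝ)| ^ p := by
    rcases eq_or_ne z 0 with rfl | hz
    · simp [zero_rpow (by linarith : p ≠ 0)]
    · exact self_le_rpow_of_one_le (by exact_mod_cast Int.one_le_abs hz) hp
  nlinarith

theorem Theta_nonneg (p τ : ℝ) : 0 ≤ Theta p τ :=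
  tsum_nonneg fun _ ↦ (exp_pos _).le

theorem Theta_le_of_one_le {p τ : ℝ} (hp : 1 ≤ p) (hτ : 0 < τ) :
    Theta p τ ≤ (1 + exp (-τ)) / (1 - exp (-τ)) := by
  have hr : ‖exp (-τ)‖ < 1 := by
    rw [norm_of_nonneg (exp_pos _).le, exp_lt_one_iff]; linarith
  have hgeom := hasSum_pow_natAbs hr
  have hle := exp_neg_mul_rpow_abs_le hp hτ.le
  exact hasSum_le hle
    (Summable.of_nonneg_of_le (fun _ ↦ (exp_pos _).le) hle hgeom.summable).hasSum hgeom

theorem exp_neg_three_le : exp (-3) ≤ 1 / 13 := by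
  have h := sum_le_exp_of_nonneg (x := 3) (by norm_num) 4
  norm_num [Finset.sum_range_succ, Nat.factorial] at h
  rw [exp_neg]
  exact inv_le_of_inv_le₀ (by norm_num) (by simpa using h)

theorem exp_three_eighths_le : exp (3 / 8) ≤ 8 / 5 := by
  convert exp_bound_div_one_sub_of_interval (x := 3 / 8) (by norm_num) (by norm_num) using 1
  norm_num

/-- For every `p ≥ 3`, `inf_{τ > 0} exp(τ/2^p) Θ_p(τ) < 2`. -/
theorem Wp_lt_two (p : ℝ) (hp : 3 ≤ p) :
    (⨅ τ : Set.Ioi (0 : ℝ), Real.exp ((τ : ℝ) / 2 ^ p) * Theta p τ) < 2 := by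
  have h2p : (8 : ℝ) ≤ 2 ^ p := by
    have h := rpow_le_rpow_of_exponent_le (by norm_num : (1 : ℝ) ≤ 2) hp
    norm_num at h
    exact h
  have hexp : exp (3 / 2 ^ p) ≤ 8 / 5 :=
    (exp_le_exp.2 (div_le_div_of_nonneg_left (by norm_num) (by norm_num) h2p)).trans
      exp_three_eighths_le
  have hΘ : Theta p 3 ≤ 7 / 6 := by
    have hr := exp_neg_three_le
    have hr0 := exp_pos (-3)
    refine (Theta_le_of_one_le (by linarith) (by norm_num)).trans ?_
    rw [div_le_div_iff₀ (by linarith) (by norm_num)]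
    linarith
  have hbdd : BddBelow (Set.range fun τ : Set.Ioi (0 : ℝ) ↦ exp (τ / 2 ^ p) * Theta p τ) :=
    ⟨0, Set.forall_mem_range.2 fun _ ↦ mul_nonneg (exp_pos _).le (Theta_nonneg _ _)⟩
  calc (⨅ τ : Set.Ioi (0 : ℝ), exp ((τ : ℝ) / 2 ^ p) * Theta p τ)
      ≤ exp (3 / 2 ^ p) * Theta p 3 := ciInf_le hbdd ⟨3, by norm_num⟩
    _ ≤ 8 / 5 * (7 / 6) := mul_le_mul hexp hΘ (Theta_nonneg _ _) (by norm_num)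
    _ < 2 := by norm_num
end
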